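/- arXiv:1608.08261 — 2 statements merged into one kernel-verified Lean document; each statement's English description precedes it below -/
import Mathlib

section
/- Let 0 < D1 < D2 be real numbers. The supremum over all natural numbers n such that there exists an Interference Set Cover of cardinality n equals the supremum over all natural numbers n such that there exist n points x_1, …, x_n in ℝ² whose open balls of radius D1/2 are pairwise disjoint, each disjoint from the open ball of radius D1/2 centered at the origin, and each contained in the closed ball of radius D2 + D1/2 centered at the origin. In words, the maximum cardinality of an Interference Set Cover equals the solution of the Pack Problem. -/
open Metric

section NormedSpace

variable {E : Type*} [NormedAddCommGroup E] [NormedSpace ℝ E]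

theorem disjoint_ball_ball_half_iff {d : ℝ} (hd : 0 < d) {x y : E} :
    Disjoint (ball x (d / 2)) (ball y (d / 2)) ↔ d ≤ dist x y := by
  rw [disjoint_ball_ball_iff (half_pos hd) (half_pos hd), add_halves]

theorem ball_subset_closedBall_iff [Nontrivial E] {x y : E} {r R : ℝ} (hr : 0 < r) :
    ball x r ⊆ closedBall y R ↔ dist x y + r ≤ R := by
  constructor
  · intro h
    have hcl : closedBall x r ⊆ closedBall y R :=
      closure_ball x hr.ne' ▸ closure_minimal h isClosed_closedBall
    -- `x + v` is the point of `closedBall x r` farthest from `y`.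
    obtain ⟨v, hv, hray⟩ : ∃ v : E, ‖v‖ = r ∧ SameRay ℝ (x - y) v := by
      rcases eq_or_ne x y with rfl | hxy
      · obtain ⟨v, hv⟩ := exists_norm_eq E hr.le
        exact ⟨v, hv, by simp⟩
      · have hxy' : 0 < ‖x - y‖ := norm_pos_iff.mpr (sub_ne_zero.mpr hxy)
        refine ⟨(r / ‖x - y‖) • (x - y), ?_, SameRay.sameRay_nonneg_smul_right _ (by positivity)⟩
        rw [norm_smul, Real.norm_of_nonneg (by positivity), div_mul_cancel₀ _ hxy'.ne']
    have hmem := hcl (show x + v ∈ closedBall x r by simp [hv])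
    rwa [mem_closedBall, dist_eq_norm, add_sub_right_comm, hray.norm_add, hv,
      ← dist_eq_norm] at hmem
  · intro h
    exact ball_subset_closedBall.trans (closedBall_subset_closedBall' (by linarith [dist_comm x y]))

end NormedSpace

theorem maxCard_interferenceSetCover_eq_packProblem_general (D1 D2 : ℝ) (hD1 : 0 < D1) :
    sSup {n : ℕ | ∃ S : Finset (EuclideanSpace ℝ (Fin 2)), S.card = n ∧
        (∀ x ∈ S, D1 ≤ ‖x‖ ∧ ‖x‖ ≤ D2) ∧
        (S : Set (EuclideanSpace ℝ (Fin 2))).Pairwise fun x y => D1 ≤ dist x y}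
      = sSup {n : ℕ | ∃ T : Finset (EuclideanSpace ℝ (Fin 2)), T.card = n ∧
          ((T : Set (EuclideanSpace ℝ (Fin 2))).Pairwise fun x y =>
            Disjoint (ball x (D1 / 2)) (ball y (D1 / 2))) ∧
          (∀ x ∈ T, Disjoint (ball x (D1 / 2)) (ball (0 : EuclideanSpace ℝ (Fin 2)) (D1 / 2))) ∧
          (∀ x ∈ T, ball x (D1 / 2) ⊆ closedBall (0 : EuclideanSpace ℝ (Fin 2)) (D2 + D1 / 2))} := by
  simp only [disjoint_ball_ball_half_iff hD1, ball_subset_closedBall_iff (half_pos hD1),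
    dist_zero_right, add_le_add_iff_right, ← forall₂_and]
  congr 1
  ext n
  exact exists_congr fun S => and_congr_right' and_comm

/-- The maximum cardinality of an Interference Set Cover equals the solution of
the Pack Problem: the supremum of cardinalities of finite sets of points whose
norms lie in `[D1, D2]` and which are pairwise at distance at least `D1` equals
the supremum of the numbers of points whose open balls of radius `D1/2` can be
packed, pairwise disjointly, in the annulus with inner radius `D1/2` and outer
radius `D2 + D1/2` around the origin. -/
theorem maxCard_interferenceSetCover_eq_packProblem (D1 D2 : ℝ) (hD1 : 0 < D1) (hD12 : D1 < D2) :
    sSup {n : ℕ | ∃ S : Finset (EuclideanSpace ℝ (Fin 2)), S.card = n ∧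
        (∀ x ∈ S, D1 ≤ ‖x‖ ∧ ‖x‖ ≤ D2) ∧
        (S : Set (EuclideanSpace ℝ (Fin 2))).Pairwise fun x y => D1 ≤ dist x y}
      = sSup {n : ℕ | ∃ T : Finset (EuclideanSpace ℝ (Fin 2)), T.card = n ∧
          ((T : Set (EuclideanSpace ℝ (Fin 2))).Pairwise fun x y =>
            Disjoint (ball x (D1 / 2)) (ball y (D1 / 2))) ∧
          (∀ x ∈ T, Disjoint (ball x (D1 / 2)) (ball (0 : EuclideanSpace ℝ (Fin 2)) (D1 / 2))) ∧
          (∀ x ∈ T, ball x (D1 / 2) ⊆ closedBall (0 : EuclideanSpace ℝ (Fin 2)) (D2 + D1 / 2))} :=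
  maxCard_interferenceSetCover_eq_packProblem_general D1 D2 hD1
end

section
/- Let 0 < D1 ≤ D2 be real numbers, let 0 < d < D1, let η > 0, and let K = ⌊D2/D1⌋. Let S be a finite set of real numbers such that every x ∈ S satisfies D1 ≤ |x| ≤ D2 and any two distinct elements of S differ in absolute value of their difference by at least D1 (i.e., |x - y| ≥ D1 for distinct x, y ∈ S). Then the total interference power at the receiver located at coordinate d satisfies ∑_{x ∈ S} |x - d|^{-η} ≤ ∑_{k=1}^{K} ((k·D1 - d)^{-η} + (k·D1 + d)^{-η}). In words, the maximum expected intra-flow interference power is achieved by interferers located at distances D1, 2·D1, …, K·D1 from the transmitter on both sides along the line of the flow. -/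
/-! Send each interferer `x > 0` to the lattice point `⌊x / D1⌋₊ * D1 ≤ x`. By the `D1`-separation
this map is injective, its image lies in `{D1, 2 D1, …, K D1}`, and moving an interferer towards
the receiver only increases its contribution, so the positive interferers contribute at most
`∑ₖ (k D1 - d)^{-η}`. Reflecting `x ↦ -x` treats the negative interferers, with `-d` in place of `d`. -/

open Finset

lemma injOn_natFloor_div_of_pairwise_le_abs_sub {a : ℝ} (ha : 0 < a) {T : Set ℝ}
    (hT : ∀ x ∈ T, 0 ≤ x) (hsep : T.Pairwise fun x y => a ≤ |x - y|) :
    T.InjOn fun x => ⌊x / a⌋₊ := by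
  intro x hx y hy hxy
  by_contra hne
  have hfloor : ⌊x / a⌋ = ⌊y / a⌋ := by
    rw [← Int.natCast_floor_eq_floor (div_nonneg (hT x hx) ha.le),
      ← Int.natCast_floor_eq_floor (div_nonneg (hT y hy) ha.le)]
    exact congrArg _ hxy
  have hlt : |x / a - y / a| < 1 := Int.abs_sub_lt_one_of_floor_eq_floor hfloor
  rw [← sub_div, abs_div, abs_of_pos ha, div_lt_one ha] at hlt
  exact (hsep hx hy hne).not_gt hlt

lemma sum_le_sum_Icc_natFloor_of_antitoneOn {a b : ℝ} (ha : 0 < a) {g : ℝ → ℝ}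
    (hg : AntitoneOn g (Set.Ici a)) (hg₀ : ∀ x ∈ Set.Ici a, 0 ≤ g x) (T : Finset ℝ)
    (hT : ∀ x ∈ T, a ≤ x ∧ x ≤ b) (hsep : (T : Set ℝ).Pairwise fun x y => a ≤ |x - y|) :
    ∑ x ∈ T, g x ≤ ∑ k ∈ Icc 1 ⌊b / a⌋₊, g (k * a) := by
  set f : ℝ → ℕ := fun x => ⌊x / a⌋₊
  have hf_mem : ∀ x ∈ T, f x ∈ Icc 1 ⌊b / a⌋₊ := fun x hx => Finset.mem_Icc.mpr
    ⟨Nat.le_floor (by rw [Nat.cast_one, le_div_iff₀ ha, one_mul]; exact (hT x hx).1),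
      Nat.floor_le_floor (div_le_div_of_nonneg_right (hT x hx).2 ha.le)⟩
  have hlattice_mem : ∀ k ∈ Icc 1 ⌊b / a⌋₊, (k : ℝ) * a ∈ Set.Ici a := fun k hk => by
    have hk1 : (1 : ℝ) ≤ k := by exact_mod_cast (Finset.mem_Icc.mp hk).1
    exact le_mul_of_one_le_left ha.le hk1
  have hf_le : ∀ x ∈ T, (f x : ℝ) * a ≤ x := fun x hx =>
    (le_div_iff₀ ha).mp (Nat.floor_le (div_nonneg (ha.le.trans (hT x hx).1) ha.le))
  have hf_inj : (T : Set ℝ).InjOn f :=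
    injOn_natFloor_div_of_pairwise_le_abs_sub ha (fun x hx => ha.le.trans (hT x hx).1) hsep
  calc ∑ x ∈ T, g x
      ≤ ∑ x ∈ T, g (f x * a) := Finset.sum_le_sum fun x hx =>
        hg (hlattice_mem _ (hf_mem x hx)) (hT x hx).1 (hf_le x hx)
    _ = ∑ k ∈ T.image f, g (k * a) := (Finset.sum_image (f := fun k : ℕ => g (k * a)) hf_inj).symm
    _ ≤ ∑ k ∈ Icc 1 ⌊b / a⌋₊, g (k * a) :=
        Finset.sum_le_sum_of_subset_of_nonneg (Finset.image_subset_iff.mpr hf_mem)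
          fun k hk _ => hg₀ _ (hlattice_mem k hk)

lemma antitoneOn_abs_sub_rpow_neg {a c η : ℝ} (hc : c < a) (hη : 0 ≤ η) :
    AntitoneOn (fun x => |x - c| ^ (-η)) (Set.Ici a) := by
  intro x hx y hy hxy
  simp only [Set.mem_Ici] at hx hy
  dsimp only
  rw [abs_of_pos (by linarith : 0 < x - c), abs_of_pos (by linarith : 0 < y - c)]
  exact Real.rpow_le_rpow_of_nonpos (by linarith) (by linarith) (by linarith)

lemma sum_abs_sub_rpow_neg_le_of_pos {a b c η : ℝ} (ha : 0 < a) (hc : c < a) (hη : 0 ≤ η)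
    (T : Finset ℝ) (hT : ∀ x ∈ T, a ≤ x ∧ x ≤ b)
    (hsep : (T : Set ℝ).Pairwise fun x y => a ≤ |x - y|) :
    ∑ x ∈ T, |x - c| ^ (-η) ≤ ∑ k ∈ Icc 1 ⌊b / a⌋₊, (k * a - c) ^ (-η) := by
  refine (sum_le_sum_Icc_natFloor_of_antitoneOn ha (antitoneOn_abs_sub_rpow_neg hc hη)
    (fun x _ => Real.rpow_nonneg (abs_nonneg _) _) T hT hsep).trans_eq (Finset.sum_congr rfl ?_)
  intro k hk
  have hk1 : (1 : ℝ) ≤ k := by exact_mod_cast (Finset.mem_Icc.mp hk).1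
  rw [abs_of_pos (by nlinarith)]

lemma sum_abs_sub_rpow_neg_le_of_neg {a b c η : ℝ} (ha : 0 < a) (hc : -a < c) (hη : 0 ≤ η)
    (T : Finset ℝ) (hT : ∀ x ∈ T, a ≤ -x ∧ -x ≤ b)
    (hsep : (T : Set ℝ).Pairwise fun x y => a ≤ |x - y|) :
    ∑ x ∈ T, |x - c| ^ (-η) ≤ ∑ k ∈ Icc 1 ⌊b / a⌋₊, (k * a + c) ^ (-η) := by
  have hneg_inj : Set.InjOn (fun x : ℝ => -x) T := neg_injective.injOn
  calc ∑ x ∈ T, |x - c| ^ (-η)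
      = ∑ y ∈ T.image (fun x => -x), |y - -c| ^ (-η) := by
        rw [Finset.sum_image hneg_inj]
        refine Finset.sum_congr rfl fun x _ => ?_
        rw [← abs_neg, neg_sub, sub_neg_eq_add, neg_add_eq_sub]
    _ ≤ ∑ k ∈ Icc 1 ⌊b / a⌋₊, (k * a - -c) ^ (-η) := by
        refine sum_abs_sub_rpow_neg_le_of_pos ha (by linarith) hη _ ?_ ?_
        · simpa only [Finset.forall_mem_image] using hT
        · rw [Finset.coe_image, hneg_inj.pairwise_image]
          intro x hx y hy hxy
          simpa only [Function.onFun, neg_sub_neg, abs_sub_comm y x] using hsep hx hy hxy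
    _ = ∑ k ∈ Icc 1 ⌊b / a⌋₊, (k * a + c) ^ (-η) := by simp only [sub_neg_eq_add]

theorem intraflow_interference_bound_general (D1 D2 d η : ℝ) (hD1 : 0 < D1)
    (hd0 : 0 < d) (hd1 : d < D1) (hη : 0 < η)
    (S : Finset ℝ)
    (hmem : ∀ x ∈ S, D1 ≤ |x| ∧ |x| ≤ D2)
    (hsep : (S : Set ℝ).Pairwise fun x y => D1 ≤ |x - y|) :
    ∑ x ∈ S, |x - d| ^ (-η)
      ≤ ∑ k ∈ Finset.Icc 1 ⌊D2 / D1⌋₊,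
          ((k * D1 - d) ^ (-η) + (k * D1 + d) ^ (-η)) := by
  classical
  rw [← Finset.sum_filter_add_sum_filter_not S (0 < ·), Finset.sum_add_distrib]
  gcongr ?_ + ?_
  · refine sum_abs_sub_rpow_neg_le_of_pos hD1 hd1 hη.le _ (fun x hx => ?_)
      (hsep.mono (Finset.coe_subset.mpr (Finset.filter_subset _ _)))
    rw [Finset.mem_filter] at hx
    simpa only [abs_of_pos hx.2] using hmem x hx.1
  · refine sum_abs_sub_rpow_neg_le_of_neg hD1 (by linarith) hη.le _ (fun x hx => ?_)
      (hsep.mono (Finset.coe_subset.mpr (Finset.filter_subset _ _)))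
    rw [Finset.mem_filter, not_lt] at hx
    simpa only [abs_of_nonpos hx.2] using hmem x hx.1

/-- Intra-flow interference bound: with transmitter at `0` and receiver at
`d ∈ (0, D1)` on a line, and interferers `S ⊆ ℝ` with `D1 ≤ |x| ≤ D2` and
pairwise separation `|x - y| ≥ D1`, the total interference power satisfies
`∑_{x ∈ S} |x - d|^{-η} ≤ ∑_{k=1}^{K} ((k·D1 - d)^{-η} + (k·D1 + d)^{-η})`
with `K = ⌊D2/D1⌋`, i.e. the maximum is achieved by interferers at distances
`D1, 2·D1, …, K·D1` on both sides of the transmitter. -/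
theorem intraflow_interference_bound (D1 D2 d η : ℝ) (hD1 : 0 < D1) (hD12 : D1 ≤ D2)
    (hd0 : 0 < d) (hd1 : d < D1) (hη : 0 < η)
    (S : Finset ℝ)
    (hmem : ∀ x ∈ S, D1 ≤ |x| ∧ |x| ≤ D2)
    (hsep : (S : Set ℝ).Pairwise fun x y => D1 ≤ |x - y|) :
    ∑ x ∈ S, |x - d| ^ (-η)
      ≤ ∑ k ∈ Finset.Icc 1 ⌊D2 / D1⌋₊,
          ((k * D1 - d) ^ (-η) + (k * D1 + d) ^ (-η)) :=
  intraflow_interference_bound_general D1 D2 d η hD1 hd0 hd1 hη S hmem hsep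
end
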